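/- Let G be the presented group ⟨a, t | t a t⁻¹ = a²⟩ (the Baumslag–Solitar group BS(1,2)), and let ε : G → ℤ be the homomorphism determined by a ↦ 0 and t ↦ 1. Then the kernel of ε is isomorphic, as a group, to the additive group ℤ[1/2] = {q : ℚ | ∃ m : ℤ, ∃ n : ℕ, q = m / 2ⁿ}; in particular, ker ε is not finitely generated. -/

import Mathlib

/-- The additive group `ℤ[1/2]` of dyadic rationals `m / 2ⁿ`. -/
def dyadic : AddSubgroup ℚ where
  carrier := {q : ℚ | ∃ m : ℤ, ∃ n : ℕ, q = m / 2 ^ n}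
  zero_mem' := ⟨0, 0, by norm_num⟩
  add_mem' := by
    rintro a b ⟨m₁, n₁, rfl⟩ ⟨m₂, n₂, rfl⟩
    refine ⟨m₁ * 2 ^ n₂ + m₂ * 2 ^ n₁, n₁ + n₂, ?_⟩
    have h₁ : (2 : ℚ) ^ n₁ ≠ 0 := by positivity
    have h₂ : (2 : ℚ) ^ n₂ ≠ 0 := by positivity
    field_simp
    push_cast
    ring_nf
  neg_mem' := by
    rintro a ⟨m, n, rfl⟩
    exact ⟨-m, n, by push_cast; ring⟩

/-- The relator `t a t⁻¹ a⁻²` of the Baumslag–Solitar group `BS(1,2)`,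
with `a = of 0` and `t = of 1`. -/
def bsRel : FreeGroup (Fin 2) :=
  FreeGroup.of 1 * FreeGroup.of 0 * (FreeGroup.of 1)⁻¹ * (FreeGroup.of 0)⁻¹ *
    (FreeGroup.of 0)⁻¹

/-- The homomorphism `ε : BS(1,2) → ℤ` determined by `a ↦ 0`, `t ↦ 1`. -/
def bsEps : PresentedGroup ({bsRel} : Set (FreeGroup (Fin 2))) →* Multiplicative ℤ :=
  PresentedGroup.toGroup
    (f := fun i : Fin 2 => if i = 0 then 1 else Multiplicative.ofAdd 1)
    (by
      intro r hr
      simp only [Set.mem_singleton_iff] at hr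
      subst hr
      simp [bsRel])

/-
Let `BS(1,2)` act on `ℚ` by `a ↦ (x ↦ x + 1)` and `t ↦ (x ↦ 2x)`. Every element of the group has
the form `t^(-p) a^m t^q`, which acts as `x ↦ (2^q x + m) / 2^p` and is sent by `ε` to `q - p`.
So an element of `ker ε` is `t^(-p) a^m t^p`, acting as the translation by `m / 2^p`, and the
translation length `g ↦ g • 0` is an injective homomorphism from `ker ε` onto `ℤ[1/2]`.
Finitely many dyadic rationals have a common denominator `2^N`, so they cannot generate `2^(-N-1)`.
-/

theorem pow_mul_zpow_mul_inv_pow_eq_of_mul_mul_inv_eq {G : Type*} [Group G] {a t : G} {n : ℤ}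
    (h : t * a * t⁻¹ = a ^ n) (k : ℕ) (m : ℤ) :
    t ^ k * a ^ m * (t ^ k)⁻¹ = a ^ (n ^ k * m) := by
  induction k generalizing m with
  | zero => simp
  | succ k ih =>
    calc t ^ (k + 1) * a ^ m * (t ^ (k + 1))⁻¹
        = t ^ k * (t * a * t⁻¹) ^ m * (t ^ k)⁻¹ := by rw [conj_zpow]; group
      _ = a ^ (n ^ (k + 1) * m) := by rw [h, ← zpow_mul, ih]; ring_nf

theorem mem_dyadic_iff_exists_mem_zmultiples {q : ℚ} :
    q ∈ dyadic ↔ ∃ n : ℕ, q ∈ AddSubgroup.zmultiples ((2 : ℚ) ^ n)⁻¹ := by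
  simp only [AddSubgroup.mem_zmultiples_iff, zsmul_eq_mul, ← div_eq_mul_inv, eq_comm (b := q)]
  exact exists_comm

theorem zmultiples_inv_two_pow_monotone :
    Monotone fun n : ℕ => AddSubgroup.zmultiples ((2 : ℚ) ^ n)⁻¹ := by
  intro m n hmn
  rw [AddSubgroup.zmultiples_le, AddSubgroup.mem_zmultiples_iff]
  refine ⟨2 ^ (n - m), ?_⟩
  rw [zsmul_eq_mul, Int.cast_pow, Int.cast_ofNat, pow_sub₀ _ two_ne_zero hmn]
  field_simp

theorem inv_two_pow_succ_notMem_zmultiples (n : ℕ) :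
    ((2 : ℚ) ^ (n + 1))⁻¹ ∉ AddSubgroup.zmultiples ((2 : ℚ) ^ n)⁻¹ := by
  intro h
  obtain ⟨k, hk⟩ := AddSubgroup.mem_zmultiples_iff.1 h
  rw [zsmul_eq_mul, pow_succ] at hk
  field_simp at hk
  have hk' : k * 2 = 1 := by exact_mod_cast hk
  omega

theorem dyadic_not_fg : ¬ dyadic.FG := by
  rintro ⟨S, hS⟩
  choose! n hn using fun q (hq : q ∈ dyadic) => mem_dyadic_iff_exists_mem_zmultiples.1 hq
  let N := S.sup n
  have hle : dyadic ≤ AddSubgroup.zmultiples ((2 : ℚ) ^ N)⁻¹ := by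
    rw [← hS, AddSubgroup.closure_le]
    intro s hs
    exact zmultiples_inv_two_pow_monotone (Finset.le_sup hs)
      (hn s (hS ▸ AddSubgroup.subset_closure hs))
  exact inv_two_pow_succ_notMem_zmultiples N (hle ⟨1, N + 1, by simp⟩)

abbrev BS := PresentedGroup ({bsRel} : Set (FreeGroup (Fin 2)))

namespace BS

noncomputable def a : BS := PresentedGroup.of 0

noncomputable def t : BS := PresentedGroup.of 1

theorem t_mul_a_mul_t_inv : t * a * t⁻¹ = a ^ (2 : ℤ) := by
  have h : (QuotientGroup.mk bsRel : BS) = 1 :=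
    (QuotientGroup.eq_one_iff _).2 (Subgroup.subset_normalClosure rfl)
  have h' : t * a * t⁻¹ * a⁻¹ * a⁻¹ = 1 := h
  rw [← mul_inv_eq_one, ← h']
  group

noncomputable def normalForm (p q : ℕ) (m : ℤ) : BS := (t ^ p)⁻¹ * a ^ m * t ^ q

theorem normalForm_eq_normalForm_add (p q : ℕ) (m : ℤ) (d : ℕ) :
    normalForm p q m = normalForm (p + d) (q + d) (2 ^ d * m) := by
  simp only [normalForm, pow_add,
    ← pow_mul_zpow_mul_inv_pow_eq_of_mul_mul_inv_eq t_mul_a_mul_t_inv d m]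
  group

theorem normalForm_mul (p q r s : ℕ) (m n : ℤ) :
    normalForm p q m * normalForm r s n = normalForm (p + r) (s + q) (2 ^ r * m + 2 ^ q * n) := by
  -- after padding both factors to the exponent `q + r`, the inner powers of `t` cancel
  rw [normalForm_eq_normalForm_add p q m r, normalForm_eq_normalForm_add r s n q]
  simp only [normalForm, zpow_add, add_comm r q]
  group

theorem normalForm_inv (p q : ℕ) (m : ℤ) : (normalForm p q m)⁻¹ = normalForm q p (-m) := by
  simp only [normalForm]
  group

theorem exists_eq_normalForm (g : BS) : ∃ p q m, g = normalForm p q m := by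
  let normalForms : Subgroup BS :=
    { carrier := {g | ∃ p q m, g = normalForm p q m}
      one_mem' := ⟨0, 0, 0, by simp [normalForm]⟩
      mul_mem' := by
        rintro _ _ ⟨p, q, m, rfl⟩ ⟨r, s, n, rfl⟩
        exact ⟨_, _, _, normalForm_mul p q r s m n⟩
      inv_mem' := by
        rintro _ ⟨p, q, m, rfl⟩
        exact ⟨_, _, _, normalForm_inv p q m⟩ }
  refine PresentedGroup.generated_by _ normalForms (fun i => ?_) g
  fin_cases i
  exacts [⟨0, 0, 1, by simp [normalForm, a]⟩, ⟨0, 1, 0, by simp [normalForm, t]⟩]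

noncomputable def affineAction : BS →* Equiv.Perm ℚ :=
  PresentedGroup.toGroup
    (f := ![Equiv.addRight 1, MulAction.toPerm (Units.mk0 (2 : ℚ) two_ne_zero)])
    (by
      rintro _ rfl
      ext x
      simp [bsRel]
      ring)

theorem affineAction_a_zpow (m : ℤ) (x : ℚ) : affineAction (a ^ m) x = x + m := by
  simp [affineAction, a, PresentedGroup.toGroup.of]

theorem affineAction_t_pow (k : ℕ) (x : ℚ) : affineAction (t ^ k) x = 2 ^ k * x := by
  rw [map_pow, affineAction, t, PresentedGroup.toGroup.of, Matrix.cons_val_one,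
    Matrix.cons_val_zero, ← MulAction.toPermHom_apply, ← map_pow]
  simp [Units.smul_def]

theorem affineAction_normalForm (p q : ℕ) (m : ℤ) (x : ℚ) :
    affineAction (normalForm p q m) x = (2 ^ q * x + m) / 2 ^ p := by
  simp only [normalForm, map_mul, map_inv, Equiv.Perm.mul_apply, Equiv.Perm.inv_eq_iff_eq,
    affineAction_a_zpow, affineAction_t_pow]
  field_simp

theorem bsEps_normalForm (p q : ℕ) (m : ℤ) :
    bsEps (normalForm p q m) = Multiplicative.ofAdd ((q : ℤ) - p) := by
  simp [normalForm, bsEps, a, t, PresentedGroup.toGroup.of, ← ofAdd_nsmul, ← ofAdd_neg,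
    ← ofAdd_add, sub_eq_neg_add]

theorem exists_eq_normalForm_of_mem_ker {g : BS} (hg : g ∈ bsEps.ker) :
    ∃ p m, g = normalForm p p m := by
  obtain ⟨p, q, m, rfl⟩ := exists_eq_normalForm g
  rw [MonoidHom.mem_ker, bsEps_normalForm, ← ofAdd_zero, EmbeddingLike.apply_eq_iff_eq,
    sub_eq_zero, Nat.cast_inj] at hg
  exact ⟨p, m, by rw [hg]⟩

theorem affineAction_normalForm_self (p : ℕ) (m : ℤ) (x : ℚ) :
    affineAction (normalForm p p m) x = x + m / 2 ^ p := by
  rw [affineAction_normalForm]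
  field_simp

theorem affineAction_eq_add_of_mem_ker {g : BS} (hg : g ∈ bsEps.ker) (x : ℚ) :
    affineAction g x = x + affineAction g 0 := by
  obtain ⟨p, m, rfl⟩ := exists_eq_normalForm_of_mem_ker hg
  rw [affineAction_normalForm_self, affineAction_normalForm_self, zero_add]

noncomputable def kerToRat : Additive bsEps.ker →+ ℚ :=
  AddMonoidHom.mk' (fun g => affineAction (g.toMul : BS) 0) fun g h => by
    rw [toMul_add, Subgroup.coe_mul, map_mul, Equiv.Perm.mul_apply,
      affineAction_eq_add_of_mem_ker g.toMul.2, add_comm]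

theorem kerToRat_injective : Function.Injective kerToRat := by
  rw [injective_iff_map_eq_zero]
  intro g hg
  obtain ⟨p, m, hpm⟩ := exists_eq_normalForm_of_mem_ker g.toMul.2
  have hm : m = 0 := by
    have h : affineAction (normalForm p p m) 0 = 0 := hpm ▸ hg
    rw [affineAction_normalForm_self, zero_add, div_eq_zero_iff] at h
    exact_mod_cast h.resolve_right (by positivity)
  have h1 : (g.toMul : BS) = 1 := by rw [hpm, hm, normalForm]; group
  exact toMul_eq_one.1 (Subtype.ext h1)

theorem kerToRat_range : kerToRat.range = dyadic := by
  ext q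
  constructor
  · rintro ⟨g, rfl⟩
    obtain ⟨p, m, hpm⟩ := exists_eq_normalForm_of_mem_ker g.toMul.2
    exact ⟨m, p, by simp [kerToRat, hpm, affineAction_normalForm_self]⟩
  · rintro ⟨m, n, rfl⟩
    have hker : normalForm n n m ∈ bsEps.ker := by
      rw [MonoidHom.mem_ker, bsEps_normalForm, sub_self, ofAdd_zero]
    exact ⟨Additive.ofMul ⟨_, hker⟩, by simp [kerToRat, affineAction_normalForm_self]⟩

end BS

/-- the kernel of `ε : BS(1,2) → ℤ`, `a ↦ 0`, `t ↦ 1`, is isomorphic as a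
group to the additive group of dyadic rationals `ℤ[1/2]`; in particular it is not
finitely generated. -/
theorem bs_kernel_iso_dyadic :
    Nonempty (Additive bsEps.ker ≃+ dyadic) ∧ ¬ Group.FG bsEps.ker := by
  let e : Additive bsEps.ker ≃+ dyadic :=
    (AddMonoidHom.ofInjective BS.kerToRat_injective).trans
      (AddEquiv.addSubgroupCongr BS.kerToRat_range)
  refine ⟨⟨e⟩, fun hfg => dyadic_not_fg ?_⟩
  have : AddGroup.FG dyadic :=
    AddGroup.fg_of_surjective (hG := GroupFG.iff_add_fg.1 hfg) (f := e.toAddMonoidHom)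
      e.surjective
  exact (AddGroup.fg_iff_addSubgroup_fg dyadic).1 this
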